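/- arXiv:1811.10985 — 8 statements merged into one kernel-verified Lean document; each statement's English description precedes it below -/
import Mathlib

section
/- Let P_n be defined by P_0(x)=1, P_1(x)=x and P_{n+1}(x) = x P_n(x) - (1/4)(x^2+1) P_{n-1}(x) for n ≥ 1. Then for all n ≥ 1, P_n'(x) = ((n+1)/2) P_{n-1}(x). -/
open Polynomial

theorem stmt1 (P : ℕ → Polynomial ℝ)
    (h0 : P 0 = 1) (h1 : P 1 = X)
    (hrec : ∀ n, P (n+2) = X * P (n+1) - C (1/4) * (X^2 + 1) * P n) :
    ∀ n, 1 ≤ n → derivative (P n) = C (((n : ℝ) + 1)/2) * P (n-1) := by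
  have hC : (C (1/4 : ℝ) : Polynomial ℝ) * 4 = 1 := by
    rw [← map_ofNat (C : ℝ →+* Polynomial ℝ) 4, ← C_mul]
    norm_num
  have key : ∀ n, 2 * derivative (P (n+1)) = ((n : Polynomial ℝ) + 2) * P n ∧
      2 * derivative (P (n+2)) = ((n : Polynomial ℝ) + 3) * P (n+1) := by
    intro n
    induction n with
    | zero =>
      constructor
      · simp [h1, h0]
      · rw [hrec 0, h1, h0]
        simp only [derivative_sub, derivative_mul, derivative_X, derivative_C,
          derivative_add, derivative_X_pow, derivative_one, C_eq_natCast, Nat.cast_ofNat, map_ofNat]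
        push_cast
        linear_combination (-X) * hC
    | succ m ih =>
      obtain ⟨ih1, ih2⟩ := ih
      constructor
      · push_cast
        linear_combination ih2
      · rw [hrec (m+1)]
        simp only [derivative_sub, derivative_mul, derivative_X, derivative_C,
          derivative_add, derivative_X_pow, derivative_one, C_eq_natCast, Nat.cast_ofNat, map_ofNat]
        push_cast
        linear_combination X * ih2 - (C (1/4:ℝ) * (X^2+1)) * ih1
          - ((m : Polynomial ℝ) + 2) * (hrec m) - X * P (m+1) * hC
  intro n hn
  obtain ⟨m, rfl⟩ : ∃ m, n = m + 1 := ⟨n - 1, by omega⟩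
  simp only [Nat.add_sub_cancel]
  have h := (key m).1
  have h2 : (C ((((m+1 : ℕ) : ℝ) + 1)/2) : Polynomial ℝ) * 2 = (m : Polynomial ℝ) + 2 := by
    rw [← map_ofNat (C : ℝ →+* Polynomial ℝ) 2, ← C_mul,
      show ((m : Polynomial ℝ)) = C (m : ℝ) from (C_eq_natCast m).symm, ← C_add]
    congr 1
    push_cast
    ring
  have h3 : 2 * derivative (P (m+1)) = 2 * (C ((((m+1 : ℕ) : ℝ) + 1)/2) * P m) := by
    rw [h, ← h2]; ring
  exact mul_left_cancel₀ (by norm_num : (2 : Polynomial ℝ) ≠ 0) h3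
end

section
/- Let P_n be defined by P_0(x)=1, P_1(x)=x and P_{n+1}(x) = x P_n(x) - (1/4)(x^2+1) P_{n-1}(x) for n ≥ 1. Then for each n ≥ 1, the n real numbers x_{n,k} = cot(kπ/(n+1)), k = 1, ..., n, are exactly the zeros of P_n. -/
/-!
Substituting `x = cot θ` with `θ ∈ (0, π)` turns the recurrence, multiplied by `2ⁿ⁺² sinⁿ⁺³ θ`,
into `sin ((n + 3) θ) = 2 cos θ sin ((n + 2) θ) - sin ((n + 1) θ)`, so that
`2ⁿ sinⁿ⁺¹ θ · P_n (cot θ) = sin ((n + 1) θ)`. Since `cot` is a bijection from `(0, π)` onto `ℝ`,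
the zeros of `P_n` are the cotangents of the zeros `kπ / (n + 1)`, `1 ≤ k ≤ n`, of `sin ((n + 1) θ)`
in `(0, π)`, and these are pairwise distinct.
-/

open Real Set

namespace Real

lemma cot_eq_tan_pi_div_two_sub (θ : ℝ) : cot θ = tan (π / 2 - θ) := by
  rw [tan_pi_div_two_sub, ← cot_inv_eq_tan, inv_inv]

lemma cot_mul_sin_of_sin_ne_zero {θ : ℝ} (hθ : sin θ ≠ 0) : cot θ * sin θ = cos θ := by
  rw [cot_eq_cos_div_sin, div_mul_cancel₀ _ hθ]

lemma injOn_cot : InjOn cot (Ioo 0 π) := by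
  intro a ⟨ha0, haπ⟩ b ⟨hb0, hbπ⟩ hab
  rw [cot_eq_tan_pi_div_two_sub, cot_eq_tan_pi_div_two_sub] at hab
  have := injOn_tan ⟨by linarith, by linarith⟩ ⟨by linarith, by linarith⟩ hab
  linarith

lemma exists_mem_Ioo_cot_eq (x : ℝ) : ∃ θ ∈ Ioo 0 π, cot θ = x := by
  obtain ⟨h₁, h₂⟩ := arctan_mem_Ioo x
  exact ⟨π / 2 - arctan x, ⟨by linarith, by linarith⟩,
    by rw [cot_eq_tan_pi_div_two_sub, sub_sub_cancel, tan_arctan]⟩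

lemma sin_add_add_sin_sub (a b : ℝ) : sin (a + b) + sin (a - b) = 2 * cos b * sin a := by
  rw [sin_add, sin_sub]; ring

lemma nat_mul_pi_div_mem_Ioo {k n : ℕ} (hk : 1 ≤ k) (hkn : k ≤ n) :
    k * π / (n + 1) ∈ Ioo 0 π := by
  have hk' : (1 : ℝ) ≤ k := by exact_mod_cast hk
  have hkn' : (k : ℝ) ≤ n := by exact_mod_cast hkn
  refine ⟨by positivity, (div_lt_iff₀ (by positivity)).2 ?_⟩
  nlinarith [pi_pos]

lemma exists_eq_nat_mul_pi_div_of_sin_eq_zero {n : ℕ} {θ : ℝ} (hθ : θ ∈ Ioo 0 π)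
    (h : sin ((n + 1) * θ) = 0) : ∃ k : ℕ, 1 ≤ k ∧ k ≤ n ∧ θ = k * π / (n + 1) := by
  obtain ⟨m, hm⟩ := sin_eq_zero_iff.1 h
  obtain ⟨hθ0, hθπ⟩ := hθ
  have hn : (0 : ℝ) < n + 1 := by positivity
  have hm0 : 0 < m := by exact_mod_cast (show (0 : ℝ) < m by nlinarith [pi_pos])
  have hmn : m < n + 1 := by exact_mod_cast (show (m : ℝ) < n + 1 by nlinarith [pi_pos])
  lift m to ℕ using hm0.le
  refine ⟨m, by omega, by omega, ?_⟩
  rw [eq_div_iff hn.ne']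
  push_cast at hm
  linarith

end Real

lemma two_pow_mul_sin_pow_mul_cot (P : ℕ → ℝ → ℝ)
    (h0 : ∀ x, P 0 x = 1) (h1 : ∀ x, P 1 x = x)
    (hrec : ∀ n x, P (n + 2) x = x * P (n + 1) x - (1 / 4) * (x ^ 2 + 1) * P n x)
    {θ : ℝ} (hθ : sin θ ≠ 0) (n : ℕ) :
    2 ^ n * sin θ ^ (n + 1) * P n (cot θ) = sin ((n + 1) * θ) := by
  have hcot := cot_mul_sin_of_sin_ne_zero hθ
  induction n using Nat.twoStepInduction with
  | zero => simp [h0]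
  | one =>
    rw [h1, show ((1 : ℕ) + 1 : ℝ) * θ = 2 * θ by norm_num, sin_two_mul]
    linear_combination 2 * sin θ * hcot
  | more m ih₀ ih₁ =>
    have hsin := sin_add_add_sin_sub (((m : ℝ) + 2) * θ) θ
    rw [show ((m : ℝ) + 2) * θ + θ = ((m + 2 : ℕ) + 1) * θ by push_cast; ring,
      show ((m : ℝ) + 2) * θ - θ = (m + 1) * θ by ring,
      show (m : ℝ) + 2 = ((m + 1 : ℕ) + 1) by push_cast; ring, ← ih₀, ← ih₁] at hsin
    rw [eq_sub_of_add_eq hsin, hrec]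
    set x := cot θ
    linear_combination
      (2 ^ (m + 2) * sin θ ^ (m + 2) * P (m + 1) x - 2 ^ m * sin θ ^ (m + 1) * P m x *
        (x * sin θ + cos θ)) * hcot - 2 ^ m * sin θ ^ (m + 1) * P m x * cos_sq_add_sin_sq θ

theorem stmt2_general (P : ℕ → ℝ → ℝ)
    (h0 : ∀ x, P 0 x = 1) (h1 : ∀ x, P 1 x = x)
    (hrec : ∀ n x, P (n+2) x = x * P (n+1) x - (1/4) * (x^2+1) * P n x)
    (n : ℕ) :
    (∀ x : ℝ, P n x = 0 ↔
        ∃ k : ℕ, 1 ≤ k ∧ k ≤ n ∧ x = Real.cot (k * Real.pi / (n+1)))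
    ∧ ∀ k l : ℕ, 1 ≤ k → k ≤ n → 1 ≤ l → l ≤ n → k ≠ l →
        Real.cot (k * Real.pi / (n+1)) ≠ Real.cot (l * Real.pi / (n+1)) := by
  have hzero : ∀ θ ∈ Ioo 0 π, P n (cot θ) = 0 ↔ sin ((n + 1) * θ) = 0 := fun θ hθ ↦ by
    have hsin := (sin_pos_of_pos_of_lt_pi hθ.1 hθ.2).ne'
    rw [← two_pow_mul_sin_pow_mul_cot P h0 h1 hrec hsin, mul_eq_zero_iff_left (by positivity)]
  refine ⟨fun x ↦ ⟨fun hx ↦ ?_, ?_⟩, ?_⟩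
  · obtain ⟨θ, hθ, rfl⟩ := exists_mem_Ioo_cot_eq x
    obtain ⟨k, hk, hkn, rfl⟩ := exists_eq_nat_mul_pi_div_of_sin_eq_zero hθ ((hzero θ hθ).1 hx)
    exact ⟨k, hk, hkn, rfl⟩
  · rintro ⟨k, hk, hkn, rfl⟩
    rw [hzero _ (nat_mul_pi_div_mem_Ioo hk hkn), mul_div_cancel₀ _ (by positivity)]
    exact sin_nat_mul_pi k
  · intro k l hk hkn hl hln hkl hcot
    have := injOn_cot (nat_mul_pi_div_mem_Ioo hk hkn) (nat_mul_pi_div_mem_Ioo hl hln) hcot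
    rw [div_left_inj' (by positivity), mul_left_inj' pi_ne_zero, Nat.cast_inj] at this
    exact hkl this

theorem stmt2 (P : ℕ → ℝ → ℝ)
    (h0 : ∀ x, P 0 x = 1) (h1 : ∀ x, P 1 x = x)
    (hrec : ∀ n x, P (n+2) x = x * P (n+1) x - (1/4) * (x^2+1) * P n x)
    (n : ℕ) (hn : 1 ≤ n) :
    (∀ x : ℝ, P n x = 0 ↔
        ∃ k : ℕ, 1 ≤ k ∧ k ≤ n ∧ x = Real.cot (k * Real.pi / (n+1)))
    ∧ ∀ k l : ℕ, 1 ≤ k → k ≤ n → 1 ≤ l → l ≤ n → k ≠ l →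
        Real.cot (k * Real.pi / (n+1)) ≠ Real.cot (l * Real.pi / (n+1)) :=
  stmt2_general P h0 h1 hrec n
end

section
/- Let {c_n}_{n≥1} and {d_{n+1}}_{n≥1} be real sequences, and define polynomials P_n by P_0(x)=1, P_1(x)=x-c_1, P_{n+1}(x) = (x-c_{n+1})P_n(x) - d_{n+1}(x^2+1)P_{n-1}(x). If {d_{n+1}}_{n≥1} is a positive chain sequence with minimal parameter sequence {ℓ_{n+1}}_{n≥0} (i.e., ℓ_1=0, 0<ℓ_{n+1}<1 for n≥1, and d_{n+1}=(1-ℓ_n)ℓ_{n+1}), then the leading coefficient of P_n equals ∏_{k=1}^{n}(1-ℓ_k), and in particular P_n has exact degree n. -/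
/-!
Since `x² + 1` is monic of degree 2, the coefficients `κₙ` of `xⁿ` in `Pₙ` obey
`κₙ₊₂ = κₙ₊₁ - dₙ₊₂ κₙ` with `κ₀ = κ₁ = 1`. The relation `dₙ₊₂ = (1 - ℓₙ₊₁) ℓₙ₊₂` shows that
`∏_{k ≤ n} (1 - ℓₖ)` satisfies the same recurrence (with `ℓ₁ = 0`), and it is positive because
`ℓₖ < 1`, so `κₙ` is the leading coefficient of `Pₙ`.
-/

open Polynomial

section ThreeTermRecurrence

variable {R : Type*} [CommRing R]

lemma coeff_threeTerm_of_natDegree_le {p q : R[X]} {n : ℕ} (a b : R)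
    (hp : p.natDegree ≤ n + 1) (hq : q.natDegree ≤ n) :
    ((X - C a) * p - C b * (X ^ 2 + 1) * q).coeff (n + 2) = p.coeff (n + 1) - b * q.coeff n := by
  have hp' : p.coeff (n + 2) = 0 := coeff_eq_zero_of_natDegree_lt (by omega)
  have hq' : q.coeff (n + 2) = 0 := coeff_eq_zero_of_natDegree_lt (by omega)
  rw [mul_assoc, add_mul, one_mul, coeff_sub, sub_mul, coeff_sub, coeff_X_mul, coeff_C_mul,
    coeff_C_mul, coeff_add, coeff_X_pow_mul, hp', hq']
  ring

lemma natDegree_threeTerm_le {p q : R[X]} {n : ℕ} (a b : R)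
    (hp : p.natDegree ≤ n + 1) (hq : q.natDegree ≤ n) :
    ((X - C a) * p - C b * (X ^ 2 + 1) * q).natDegree ≤ n + 2 := by
  have hQ : (C b * (X ^ 2 + 1) : R[X]).natDegree ≤ 2 := by compute_degree
  refine (natDegree_sub_le_of_le (natDegree_mul_le_of_le (natDegree_X_sub_C_le a) hp)
    (natDegree_mul_le_of_le hQ hq)).trans ?_
  omega

variable (c d : ℕ → R) (P : ℕ → R[X]) (h0 : P 0 = 1) (h1 : P 1 = X - C (c 1))
  (hrec : ∀ n, P (n + 2) = (X - C (c (n + 2))) * P (n + 1) - C (d (n + 2)) * (X ^ 2 + 1) * P n)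
include h0 h1 hrec

lemma natDegree_le_of_threeTerm : ∀ n, (P n).natDegree ≤ n := by
  intro n
  induction n using Nat.twoStepInduction with
  | zero => simp [h0]
  | one => rw [h1]; exact natDegree_X_sub_C_le _
  | more n ih ih' => rw [hrec]; exact natDegree_threeTerm_le _ _ ih' ih

lemma coeff_add_two_self_of_threeTerm (n : ℕ) :
    (P (n + 2)).coeff (n + 2) = (P (n + 1)).coeff (n + 1) - d (n + 2) * (P n).coeff n := by
  rw [hrec]
  exact coeff_threeTerm_of_natDegree_le _ _ (natDegree_le_of_threeTerm c d P h0 h1 hrec _)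
    (natDegree_le_of_threeTerm c d P h0 h1 hrec _)

end ThreeTermRecurrence

lemma prod_Icc_one_sub_add_two {d ℓ : ℕ → ℝ} (hd : ∀ n, 1 ≤ n → d (n + 1) = (1 - ℓ n) * ℓ (n + 1))
    (n : ℕ) :
    ∏ k ∈ Finset.Icc 1 (n + 2), (1 - ℓ k) =
      ∏ k ∈ Finset.Icc 1 (n + 1), (1 - ℓ k) - d (n + 2) * ∏ k ∈ Finset.Icc 1 n, (1 - ℓ k) := by
  rw [Finset.prod_Icc_succ_top (by omega), Finset.prod_Icc_succ_top (by omega : 1 ≤ n + 1),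
    hd (n + 1) (by omega)]
  ring

theorem stmt3 (c d ℓ : ℕ → ℝ) (P : ℕ → Polynomial ℝ)
    (h0 : P 0 = 1) (h1 : P 1 = X - C (c 1))
    (hrec : ∀ n, P (n+2) = (X - C (c (n+2))) * P (n+1) - C (d (n+2)) * (X^2 + 1) * P n)
    (hℓ1 : ℓ 1 = 0) (hℓ : ∀ n, 1 ≤ n → 0 < ℓ (n+1) ∧ ℓ (n+1) < 1)
    (hd : ∀ n, 1 ≤ n → d (n+1) = (1 - ℓ n) * ℓ (n+1)) :
    ∀ n : ℕ, (P n).leadingCoeff = ∏ k ∈ Finset.Icc 1 n, (1 - ℓ k) ∧ (P n).degree = n := by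
  have hcoeff : ∀ n, (P n).coeff n = ∏ k ∈ Finset.Icc 1 n, (1 - ℓ k) := by
    intro n
    induction n using Nat.twoStepInduction with
    | zero => simp [h0]
    | one => simp [h1, hℓ1]
    | more n ih ih' => rw [coeff_add_two_self_of_threeTerm c d P h0 h1 hrec, prod_Icc_one_sub_add_two hd, ih, ih']
  have hpos : ∀ n, 0 < ∏ k ∈ Finset.Icc 1 n, (1 - ℓ k) := by
    refine fun n ↦ Finset.prod_pos fun k hk ↦ ?_
    obtain ⟨m, rfl⟩ : ∃ m, k = m + 1 := Nat.exists_eq_add_one.mpr (Finset.mem_Icc.mp hk).1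
    rcases m.eq_zero_or_pos with rfl | hm
    · simp [hℓ1]
    · linarith [(hℓ m hm).2]
  intro n
  have hle := natDegree_le_of_threeTerm c d P h0 h1 hrec n
  have hne : (P n).coeff n ≠ 0 := (hcoeff n).trans_ne (hpos n).ne'
  refine ⟨?_, degree_eq_of_le_of_coeff_ne_zero (degree_le_of_natDegree_le hle) hne⟩
  rw [leadingCoeff, natDegree_eq_of_le_of_coeff_ne_zero hle hne, hcoeff]
end

section
/- With P_n, Q_n as above (same R_{II} recurrence, P_0=1, P_1=x-c_1, Q_0=0, Q_1=M_1, M_1 ≠ 0, all d_{n+1} ≠ 0), the polynomials P_n and Q_n have no common zeros for any n ≥ 1, except possibly at x = ±i; in particular, for real sequences c_n, d_{n+1} with d_{n+1} > 0, P_n and Q_n have no common real zeros. -/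
theorem stmt5 (c d : ℕ → ℝ) (M₁ : ℝ) (hM₁ : M₁ ≠ 0)
    (hd : ∀ n, 1 ≤ n → d (n+1) ≠ 0)
    (P Q : ℕ → ℂ → ℂ)
    (hP0 : ∀ x, P 0 x = 1) (hP1 : ∀ x, P 1 x = x - (c 1 : ℂ))
    (hQ0 : ∀ x, Q 0 x = 0) (hQ1 : ∀ x, Q 1 x = (M₁ : ℂ))
    (hPrec : ∀ n x, P (n+2) x = (x - (c (n+2) : ℂ)) * P (n+1) x
        - (d (n+2) : ℂ) * (x^2+1) * P n x)
    (hQrec : ∀ n x, Q (n+2) x = (x - (c (n+2) : ℂ)) * Q (n+1) x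
        - (d (n+2) : ℂ) * (x^2+1) * Q n x) :
    ∀ n, 1 ≤ n → ∀ x : ℂ, x ≠ Complex.I → x ≠ -Complex.I →
      ¬ (P n x = 0 ∧ Q n x = 0) := by
  intro n hn x hxI hxI' ⟨hPn, hQn⟩
  have hx2 : x ^ 2 + 1 ≠ 0 := by
    have hfac : x ^ 2 + 1 = (x - Complex.I) * (x + Complex.I) := by
      have h := Complex.I_sq
      linear_combination h
    rw [hfac]
    exact mul_ne_zero (sub_ne_zero.mpr hxI) (by
      intro h
      exact hxI' (by linear_combination h))
  -- Wronskian is nonzero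
  have key : ∀ m, 1 ≤ m → Q (m+1) x * P m x - Q m x * P (m+1) x ≠ 0 ∧
      Q m x * P (m - 1) x - Q (m - 1) x * P m x ≠ 0 := by
    intro m hm
    induction m, hm using Nat.le_induction with
    | base =>
      constructor
      · rw [hPrec 0 x, hQrec 0 x, hP0, hP1, hQ0, hQ1]
        have hd2 : (d 2 : ℂ) ≠ 0 := by
          exact_mod_cast hd 1 le_rfl
        have hM : (M₁ : ℂ) ≠ 0 := by exact_mod_cast hM₁
        intro h
        apply mul_ne_zero (mul_ne_zero hM hd2) hx2
        linear_combination h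
      · simp only [Nat.sub_self]
        rw [hP0, hQ0, hQ1]
        simpa using (by exact_mod_cast hM₁ : (M₁ : ℂ) ≠ 0)
    | succ k hk ih =>
      have step : Q (k+2) x * P (k+1) x - Q (k+1) x * P (k+2) x
          = (d (k+2) : ℂ) * (x^2+1) * (Q (k+1) x * P k x - Q k x * P (k+1) x) := by
        rw [hPrec k x, hQrec k x]; ring
      have hdk : (d (k+2) : ℂ) ≠ 0 := by
        exact_mod_cast hd (k+1) (by omega)
      have h1 : Q (k+2) x * P (k+1) x - Q (k+1) x * P (k+2) x ≠ 0 := by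
        rw [step]
        exact mul_ne_zero (mul_ne_zero hdk hx2) ih.1
      refine ⟨h1, ?_⟩
      simpa using ih.1
  have := (key n hn).2
  apply this
  rw [hPn, hQn]; ring
end

section
/- For n ≥ 1 and the polynomial P_n(x) = i((x-i)/2)^{n+1} - i((x+i)/2)^{n+1}, at the zero x_{n,k} = cot(kπ/(n+1)) one has x_{n,k}^2 + 1 = 1/sin^2(kπ/(n+1)) and P_{n-1}(x_{n,k}) = (-1)^{k-1} / (2 sin(kπ/(n+1)))^{n-1}, for k = 1, ..., n. -/
/-!
With `x = cot θ` one has `(x ∓ i)/2 = e^{∓iθ} / (2 sin θ)`, so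
`i((x - i)/2)^n - i((x + i)/2)^n = 2 sin (nθ) / (2 sin θ)^n`.
At `θ = kπ/(n+1)` we have `nθ = kπ - θ`, hence `sin (nθ) = (-1)^(k-1) sin θ`.
-/

open Complex
open scoped Real

theorem Complex.I_mul_exp_neg_mul_I_sub_I_mul_exp_mul_I (w : ℂ) :
    I * exp (-w * I) - I * exp (w * I) = 2 * sin w := by
  rw [exp_mul_I, exp_mul_I, cos_neg, sin_neg]
  linear_combination (-2 * sin w) * I_sq

namespace Real

theorem cot_sq_add_one {θ : ℝ} (h : sin θ ≠ 0) : cot θ ^ 2 + 1 = 1 / sin θ ^ 2 := by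
  rw [cot_eq_cos_div_sin]
  field_simp
  exact cos_sq_add_sin_sq θ

theorem ofReal_cot_sub_I_div_two {θ : ℝ} (h : sin θ ≠ 0) :
    ((cot θ : ℂ) - I) / 2 = Complex.exp (-θ * I) / (2 * sin θ) := by
  have h' : Complex.sin θ ≠ 0 := by exact_mod_cast h
  rw [exp_mul_I, cot_eq_cos_div_sin, Complex.cos_neg, Complex.sin_neg]
  push_cast
  field_simp
  ring

theorem ofReal_cot_add_I_div_two {θ : ℝ} (h : sin θ ≠ 0) :
    ((cot θ : ℂ) + I) / 2 = Complex.exp (θ * I) / (2 * sin θ) := by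
  have h' : Complex.sin θ ≠ 0 := by exact_mod_cast h
  rw [exp_mul_I, cot_eq_cos_div_sin]
  push_cast
  field_simp

theorem I_mul_cot_sub_I_pow_sub_I_mul_cot_add_I_pow {θ : ℝ} (h : sin θ ≠ 0) (n : ℕ) :
    I * (((cot θ : ℂ) - I) / 2) ^ n - I * (((cot θ : ℂ) + I) / 2) ^ n
      = ((2 * sin (n * θ) / (2 * sin θ) ^ n : ℝ) : ℂ) := by
  rw [ofReal_cot_sub_I_div_two h, ofReal_cot_add_I_div_two h, div_pow,
    div_pow, ← Complex.exp_nat_mul, ← Complex.exp_nat_mul, mul_div_assoc', mul_div_assoc',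
    div_sub_div_same]
  have hsin_mul : I * Complex.exp (n * (-θ * I)) - I * Complex.exp (n * (θ * I))
      = 2 * Complex.sin (n * θ) := by
    rw [← I_mul_exp_neg_mul_I_sub_I_mul_exp_mul_I]
    ring_nf
  rw [hsin_mul]
  push_cast
  rfl

theorem sin_nat_mul_pi_div_add_one_pos {n k : ℕ} (hk1 : 1 ≤ k) (hkn : k ≤ n) :
    0 < sin (k * π / (n + 1)) := by
  have hk : (1 : ℝ) ≤ k := by exact_mod_cast hk1
  have hkn' : (k : ℝ) ≤ n := by exact_mod_cast hkn
  apply sin_pos_of_pos_of_lt_pi (by positivity)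
  rw [div_lt_iff₀ (by positivity)]
  nlinarith [pi_pos]

theorem sin_nat_mul_nat_mul_pi_div_add_one (n k : ℕ) :
    sin (n * (k * π / (n + 1))) = -((-1) ^ k * sin (k * π / (n + 1))) := by
  have hθ : (n : ℝ) * (k * π / (n + 1)) = k * π - k * π / (n + 1) := by
    field_simp
    ring
  rw [hθ, sin_nat_mul_pi_sub]

end Real

theorem stmt9_general (n : ℕ) (k : ℕ) (hk1 : 1 ≤ k) (hkn : k ≤ n) :
    (Real.cot (k * Real.pi / (n+1)))^2 + 1 = 1 / (Real.sin (k * Real.pi / (n+1)))^2 ∧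
    Complex.I * (((Real.cot (k * Real.pi / (n+1)) : ℂ) - Complex.I)/2)^n
      - Complex.I * (((Real.cot (k * Real.pi / (n+1)) : ℂ) + Complex.I)/2)^n
      = (((-1:ℝ))^(k-1) / (2 * Real.sin (k * Real.pi / (n+1)))^(n-1) : ℝ) := by
  have hsin := Real.sin_nat_mul_pi_div_add_one_pos hk1 hkn
  refine ⟨Real.cot_sq_add_one hsin.ne', ?_⟩
  rw [Real.I_mul_cot_sub_I_pow_sub_I_mul_cot_add_I_pow hsin.ne']
  congr 1
  obtain ⟨j, rfl⟩ : ∃ j, k = j + 1 := ⟨k - 1, by omega⟩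
  obtain ⟨m, rfl⟩ : ∃ m, n = m + 1 := ⟨n - 1, by omega⟩
  rw [Real.sin_nat_mul_nat_mul_pi_div_add_one, Nat.add_sub_cancel, Nat.add_sub_cancel]
  field_simp
  ring

theorem stmt9 (n : ℕ) (hn : 1 ≤ n) (k : ℕ) (hk1 : 1 ≤ k) (hkn : k ≤ n) :
    (Real.cot (k * Real.pi / (n+1)))^2 + 1 = 1 / (Real.sin (k * Real.pi / (n+1)))^2 ∧
    Complex.I * (((Real.cot (k * Real.pi / (n+1)) : ℂ) - Complex.I)/2)^n
      - Complex.I * (((Real.cot (k * Real.pi / (n+1)) : ℂ) + Complex.I)/2)^n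
      = (((-1:ℝ))^(k-1) / (2 * Real.sin (k * Real.pi / (n+1)))^(n-1) : ℝ) :=
  stmt9_general n k hk1 hkn
end

section
/- Let n ≥ 1, x_{n,k} = cot(kπ/(n+1)) for k = 1,...,n. Then for every polynomial r of degree at most 2n-1, (1/π) ∫_{-∞}^{∞} r(x)/(x^2+1)^{n+1} dx = (1/(n+1)) ∑_{k=1}^{n} r(x_{n,k})/(x_{n,k}^2+1)^n. -/
/-!
The substitution `x = cot θ` turns `dx / (x ^ 2 + 1)` into `dθ` on `(0, π)` and
`r x / (x ^ 2 + 1) ^ n` into `sin θ ^ (2 * n) * r (cot θ)`, a form of degree `2 * n` in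
`(cos θ, sin θ)`, hence a combination of the exponentials `e^{2ijθ}` with `|j| ≤ n`. The
rectangle rule with the nodes `kπ / (n + 1)`, `0 ≤ k ≤ n`, is exact on these, because
`e^{2ijπ/(n+1)}` is an `(n + 1)`-th root of unity different from `1` when `0 < |j| ≤ n`. The
node `θ = 0` (that is, `x = ∞`) contributes the coefficient of `X ^ (2 * n)` in `r`, which vanishes.
-/

open MeasureTheory Polynomial Finset
open scoped Real
open Complex (exp I)

theorem integral_exp_two_int_mul_I (j : ℤ) :
    ∫ θ in (0 : ℝ)..π, exp (2 * j * I * θ) = if j = 0 then (π : ℂ) else 0 := by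
  split_ifs with hj
  · simp [hj]
  have hc : (2 * j * I : ℂ) ≠ 0 := by simp [hj]
  rw [integral_exp_mul_complex hc, show 2 * j * I * π = (j : ℂ) * (2 * π * I) by ring,
    Complex.exp_int_mul_two_pi_mul_I]
  simp

theorem sum_exp_two_int_mul_I_nodes {N : ℕ} {j : ℤ} (hj : |j| < N) :
    ∑ k ∈ range N, exp (2 * j * I * (k * π / N : ℝ)) = if j = 0 then (N : ℂ) else 0 := by
  split_ifs with hj0
  · simp [hj0]
  have hN : N ≠ 0 := by rintro rfl; simp at hj; linarith [abs_nonneg j]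
  set ζ := exp (2 * π * I / N)
  have hζ : IsPrimitiveRoot ζ N := Complex.isPrimitiveRoot_exp N hN
  have hterm (k : ℕ) : exp (2 * j * I * (k * π / N : ℝ)) = (ζ ^ j) ^ k := by
    rw [← Complex.exp_int_mul, ← Complex.exp_nat_mul]
    push_cast
    ring_nf
  have hne : ζ ^ j ≠ 1 := fun h =>
    hj0 (Int.eq_zero_of_abs_lt_dvd ((hζ.zpow_eq_one_iff_dvd j).mp h) hj)
  have hpow : (ζ ^ j) ^ N = 1 := by
    rw [← zpow_natCast, ← zpow_mul, mul_comm, zpow_mul, zpow_natCast, hζ.pow_eq_one, one_zpow]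
  simp_rw [hterm, geom_sum_eq hne, hpow, sub_self, zero_div]

-- A trigonometric polynomial `∑_{|j| ≤ n} c j e^{2ijθ}` is encoded as `e^{-2inθ} W(e^{2iθ})`
-- with `W.natDegree ≤ 2 * n`.
noncomputable def trigPoly (n : ℕ) (W : ℂ[X]) (θ : ℝ) : ℂ :=
  W.eval (exp (2 * I * θ)) * exp (-(2 * n * I * θ))

theorem trigPoly_eq_sum {n : ℕ} {W : ℂ[X]} (hW : W.natDegree ≤ 2 * n) (θ : ℝ) :
    trigPoly n W θ =
      ∑ d ∈ range (2 * n + 1), W.coeff d * exp (2 * ((d - n : ℤ) : ℂ) * I * θ) := by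
  rw [trigPoly, eval_eq_sum_range' (Nat.lt_succ_of_le hW), sum_mul]
  refine sum_congr rfl fun d _ => ?_
  rw [mul_assoc, ← Complex.exp_nat_mul, ← Complex.exp_add]
  push_cast
  ring_nf

theorem integral_trigPoly {n : ℕ} {W : ℂ[X]} (hW : W.natDegree ≤ 2 * n) :
    ∫ θ in (0 : ℝ)..π, trigPoly n W θ = π * W.coeff n := by
  simp_rw [trigPoly_eq_sum hW]
  rw [intervalIntegral.integral_finsetSum fun d _ => by
    apply Continuous.intervalIntegrable; fun_prop]
  simp_rw [intervalIntegral.integral_const_mul, integral_exp_two_int_mul_I, sub_eq_zero,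
    Nat.cast_inj, mul_ite, mul_zero, sum_ite_eq', mem_range]
  rw [if_pos (by omega), mul_comm]

theorem sum_trigPoly_nodes {n : ℕ} {W : ℂ[X]} (hW : W.natDegree ≤ 2 * n) :
    ∑ k ∈ range (n + 1), trigPoly n W (k * π / (n + 1)) = (n + 1) * W.coeff n := by
  simp_rw [trigPoly_eq_sum hW]
  rw [sum_comm]
  have hnodes (d : ℕ) (hd : d ∈ range (2 * n + 1)) :
      ∑ k ∈ range (n + 1), exp (2 * ((d - n : ℤ) : ℂ) * I * (k * π / (n + 1) : ℝ)) =
        if d = n then (n + 1 : ℂ) else 0 := by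
    have := sum_exp_two_int_mul_I_nodes (N := n + 1) (j := d - n)
      (by rw [mem_range] at hd; push_cast; rw [abs_sub_lt_iff]; omega)
    push_cast at this ⊢
    simp_rw [this, sub_eq_zero, Nat.cast_inj]
  simp_rw [← mul_sum]
  rw [sum_congr rfl fun d hd => congrArg _ (hnodes d hd)]
  simp_rw [mul_ite, mul_zero, sum_ite_eq', mem_range]
  rw [if_pos (by omega), mul_comm]

-- From `2 cos θ = e^{-iθ} (e^{2iθ} + 1)` and `2i sin θ = e^{-iθ} (e^{2iθ} - 1)`.
noncomputable def cosSinPoly (m b : ℕ) : ℂ[X] :=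
  C ((2 ^ m * (2 * I) ^ b)⁻¹) * (X + 1) ^ m * (X - 1) ^ b

theorem natDegree_cosSinPoly_le (m b : ℕ) : (cosSinPoly m b).natDegree ≤ m + b := by
  unfold cosSinPoly; compute_degree

theorem cos_pow_mul_sin_pow_eq_trigPoly {m b n : ℕ} (h : m + b = 2 * n) (θ : ℝ) :
    ((Real.cos θ ^ m * Real.sin θ ^ b : ℝ) : ℂ) = trigPoly n (cosSinPoly m b) θ := by
  set E := exp (θ * I)
  have hE : exp (2 * I * θ) = E ^ 2 := by rw [← Complex.exp_nat_mul]; push_cast; ring_nf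
  have hE' : E = Complex.cos θ + Complex.sin θ * I := Complex.exp_mul_I _
  have hpyth := Complex.sin_sq_add_cos_sq θ
  have hcos : E ^ 2 + 1 = 2 * E * Complex.cos θ := by
    rw [hE']; linear_combination -hpyth + Complex.sin θ ^ 2 * Complex.I_sq
  have hsin : E ^ 2 - 1 = 2 * I * E * Complex.sin θ := by
    rw [hE']; linear_combination hpyth - Complex.sin θ ^ 2 * Complex.I_sq
  have hunit : E ^ (m + b) * exp (-(2 * n * I * θ)) = 1 := by
    rw [← Complex.exp_nat_mul, ← Complex.exp_add, h]; push_cast; ring_nf; exact Complex.exp_zero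
  have hc : (2 ^ m * (2 * I) ^ b : ℂ) ≠ 0 := by simp
  simp only [trigPoly, cosSinPoly, eval_mul, eval_pow, eval_C, eval_add, eval_sub, eval_X,
    eval_one, hE, hcos, hsin]
  push_cast
  calc Complex.cos θ ^ m * Complex.sin θ ^ b
      = ((2 ^ m * (2 * I) ^ b)⁻¹ * (2 ^ m * (2 * I) ^ b)) *
          (Complex.cos θ ^ m * Complex.sin θ ^ b) * (E ^ (m + b) * exp (-(2 * n * I * θ))) := by
        rw [inv_mul_cancel₀ hc, hunit]; ring
    _ = _ := by ring

theorem hasDerivAt_cot {θ : ℝ} (hs : Real.sin θ ≠ 0) :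
    HasDerivAt Real.cot (-(Real.sin θ ^ 2)⁻¹) θ := by
  have h := (Real.hasDerivAt_cos θ).div (Real.hasDerivAt_sin θ) hs
  rw [show -Real.sin θ * Real.sin θ - Real.cos θ * Real.cos θ = -1 by
    linear_combination -Real.sin_sq_add_cos_sq θ, neg_div, one_div] at h
  exact h.congr_of_eventuallyEq (.of_forall Real.cot_eq_cos_div_sin)

theorem cot_sq_add_one {θ : ℝ} (hs : Real.sin θ ≠ 0) :
    Real.cot θ ^ 2 + 1 = (Real.sin θ ^ 2)⁻¹ := by
  rw [Real.cot_eq_cos_div_sin]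
  field_simp
  exact Real.cos_sq_add_sin_sq θ

theorem cot_eq_tan_pi_div_two_sub (θ : ℝ) : Real.cot θ = Real.tan (π / 2 - θ) := by
  rw [Real.tan_pi_div_two_sub, Real.tan_eq_sin_div_cos, Real.cot_eq_cos_div_sin, inv_div]

theorem injOn_cot : Set.InjOn Real.cot (Set.Ioo 0 π) := by
  intro a ⟨ha₀, haπ⟩ b ⟨hb₀, hbπ⟩ h
  rw [cot_eq_tan_pi_div_two_sub, cot_eq_tan_pi_div_two_sub] at h
  have := Real.injOn_tan ⟨by linarith, by linarith⟩ ⟨by linarith, by linarith⟩ h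
  linarith

theorem cot_image_Ioo : Real.cot '' Set.Ioo 0 π = Set.univ := by
  refine Set.eq_univ_of_forall fun x => ⟨π / 2 - Real.arctan x, ⟨?_, ?_⟩, ?_⟩
  · linarith [Real.arctan_lt_pi_div_two x]
  · linarith [Real.neg_pi_div_two_lt_arctan x]
  · rw [cot_eq_tan_pi_div_two_sub, sub_sub_cancel, Real.tan_arctan]

theorem integral_comp_cot_Ioo {E : Type*} [NormedAddCommGroup E] [NormedSpace ℝ E]
    (f : ℝ → E) :
    ∫ θ in Set.Ioo 0 π, f (Real.cot θ) = ∫ x, (x ^ 2 + 1)⁻¹ • f x := by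
  have hs (θ : ℝ) (hθ : θ ∈ Set.Ioo 0 π) : Real.sin θ ≠ 0 :=
    (Real.sin_pos_of_pos_of_lt_pi hθ.1 hθ.2).ne'
  symm
  rw [← setIntegral_univ, ← cot_image_Ioo, integral_image_eq_integral_abs_deriv_smul
    measurableSet_Ioo (fun θ hθ => (hasDerivAt_cot (hs θ hθ)).hasDerivWithinAt) injOn_cot]
  refine setIntegral_congr_fun measurableSet_Ioo fun θ hθ => ?_
  rw [cot_sq_add_one (hs θ hθ), inv_inv, abs_neg, abs_inv, abs_of_nonneg (sq_nonneg _), smul_smul,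
    inv_mul_cancel₀ (pow_ne_zero 2 (hs θ hθ)), one_smul]

/-- `sin θ ^ (2 * n) * r (cot θ)` for `r.natDegree ≤ 2 * n`, written so that it still makes
sense where `sin θ = 0`. -/
noncomputable def trigHomogenization (r : ℝ[X]) (n : ℕ) (θ : ℝ) : ℝ :=
  ∑ m ∈ range (2 * n + 1), r.coeff m * Real.cos θ ^ m * Real.sin θ ^ (2 * n - m)

noncomputable def trigHomogenizationPoly (r : ℝ[X]) (n : ℕ) : ℂ[X] :=
  ∑ m ∈ range (2 * n + 1), (r.coeff m : ℂ) • cosSinPoly m (2 * n - m)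

theorem natDegree_trigHomogenizationPoly_le (r : ℝ[X]) (n : ℕ) :
    (trigHomogenizationPoly r n).natDegree ≤ 2 * n := by
  refine natDegree_sum_le_of_forall_le _ _ fun m hm => (natDegree_smul_le _ _).trans ?_
  have := natDegree_cosSinPoly_le m (2 * n - m)
  rw [mem_range] at hm
  omega

theorem trigHomogenization_eq_trigPoly (r : ℝ[X]) (n : ℕ) (θ : ℝ) :
    (trigHomogenization r n θ : ℂ) = trigPoly n (trigHomogenizationPoly r n) θ := by
  simp only [trigHomogenization, trigHomogenizationPoly, trigPoly, eval_finsetSum, eval_smul,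
    sum_mul, smul_eq_mul, Complex.ofReal_sum]
  refine sum_congr rfl fun m hm => ?_
  rw [mul_assoc, Complex.ofReal_mul,
    cos_pow_mul_sin_pow_eq_trigPoly (n := n) (by rw [mem_range] at hm; omega), trigPoly]
  ring

theorem integral_trigHomogenization (r : ℝ[X]) (n : ℕ) :
    (n + 1) * ∫ θ in (0 : ℝ)..π, trigHomogenization r n θ =
      π * ∑ k ∈ range (n + 1), trigHomogenization r n (k * π / (n + 1)) := by
  apply Complex.ofReal_injective
  push_cast
  rw [← intervalIntegral.integral_ofReal]
  simp_rw [trigHomogenization_eq_trigPoly]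
  rw [integral_trigPoly (natDegree_trigHomogenizationPoly_le r n),
    sum_trigPoly_nodes (natDegree_trigHomogenizationPoly_le r n)]
  ring

theorem trigHomogenization_zero (r : ℝ[X]) (n : ℕ) :
    trigHomogenization r n 0 = r.coeff (2 * n) := by
  rw [trigHomogenization, sum_eq_single (2 * n)]
  · simp
  · intro m hm hne
    rw [mem_range] at hm
    simp [zero_pow (show 2 * n - m ≠ 0 by omega)]
  · simp

theorem trigHomogenization_eq_eval_cot {r : ℝ[X]} {n : ℕ} (hr : r.natDegree ≤ 2 * n)
    {θ : ℝ} (hs : Real.sin θ ≠ 0) :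
    trigHomogenization r n θ = r.eval (Real.cot θ) / (Real.cot θ ^ 2 + 1) ^ n := by
  rw [cot_sq_add_one hs, inv_pow, div_inv_eq_mul, ← pow_mul, trigHomogenization,
    eval_eq_sum_range' (Nat.lt_succ_of_le hr), sum_mul]
  refine sum_congr rfl fun m hm => ?_
  rw [mem_range] at hm
  rw [Real.cot_eq_cos_div_sin, ← pow_mul_pow_sub _ (Nat.le_of_lt_succ hm), div_pow]
  field_simp

theorem sin_nat_mul_pi_div_pos {k : ℕ} {N : ℝ} (hk : 0 < k) (hkN : k < N) :
    0 < Real.sin (k * π / N) := by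
  have hk' : (0 : ℝ) < k := by exact_mod_cast hk
  have hN : 0 < N := hk'.trans hkN
  refine Real.sin_pos_of_pos_of_lt_pi (by positivity) ?_
  rw [div_lt_iff₀ hN]
  nlinarith [Real.pi_pos]

theorem integral_eval_div_sq_add_one_pow {r : ℝ[X]} {n : ℕ} (hr : r.natDegree ≤ 2 * n) :
    ∫ x, r.eval x / (x ^ 2 + 1) ^ (n + 1) = ∫ θ in (0 : ℝ)..π, trigHomogenization r n θ :=
  calc
  _ = ∫ x, (x ^ 2 + 1)⁻¹ • (r.eval x / (x ^ 2 + 1) ^ n) := by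
    congr with x
    rw [smul_eq_mul, pow_succ]
    field_simp
  _ = ∫ θ in Set.Ioo 0 π, r.eval (Real.cot θ) / (Real.cot θ ^ 2 + 1) ^ n :=
    (integral_comp_cot_Ioo _).symm
  _ = ∫ θ in (0 : ℝ)..π, trigHomogenization r n θ := by
    rw [intervalIntegral.integral_of_le Real.pi_pos.le, integral_Ioc_eq_integral_Ioo]
    exact setIntegral_congr_fun measurableSet_Ioo fun θ hθ =>
      (trigHomogenization_eq_eval_cot hr (Real.sin_pos_of_pos_of_lt_pi hθ.1 hθ.2).ne').symm

theorem sum_trigHomogenization_nodes {r : ℝ[X]} {n : ℕ} (hr : r.natDegree < 2 * n) :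
    ∑ k ∈ range (n + 1), trigHomogenization r n (k * π / (n + 1)) =
      ∑ k ∈ Icc 1 n,
        r.eval (Real.cot (k * π / (n + 1))) / (Real.cot (k * π / (n + 1)) ^ 2 + 1) ^ n := by
  rw [range_eq_Ico, sum_eq_sum_Ico_succ_bot (by omega : 0 < n + 1), zero_add,
    Ico_add_one_right_eq_Icc, Nat.cast_zero, zero_mul, zero_div, trigHomogenization_zero,
    coeff_eq_zero_of_natDegree_lt hr, zero_add]
  refine sum_congr rfl fun k hk => trigHomogenization_eq_eval_cot hr.le ?_
  obtain ⟨hk₁, hkn⟩ := mem_Icc.mp hk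
  exact (sin_nat_mul_pi_div_pos hk₁ (by exact_mod_cast Nat.lt_succ_of_le hkn)).ne'

theorem stmt10 (n : ℕ) (hn : 1 ≤ n) (r : Polynomial ℝ)
    (hr : r.degree ≤ (2*n - 1 : ℕ)) :
    (1/Real.pi) * ∫ x : ℝ, r.eval x / (x^2+1)^(n+1)
      = (1/((n:ℝ)+1)) * ∑ k ∈ Finset.Icc 1 n,
          r.eval (Real.cot (k * Real.pi / (n+1)))
            / ((Real.cot (k * Real.pi / (n+1)))^2 + 1)^n := by
  have hdeg : r.natDegree < 2 * n := by
    have := natDegree_le_iff_degree_le.mpr hr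
    omega
  rw [integral_eval_div_sq_add_one_pow hdeg.le, ← sum_trigHomogenization_nodes hdeg,
    one_div_mul_eq_div, one_div_mul_eq_div, div_eq_div_iff Real.pi_ne_zero (by positivity)]
  linarith [integral_trigHomogenization r n]
end

section
/- Let {c_n}, {d_{n+1}} be real with {d_{n+1}} a positive chain sequence, and define R_n by R_0(z) = 1, R_1(z) = (1+ic_1)z + (1-ic_1), and R_{n+1}(z) = [(1+ic_{n+1})z + (1-ic_{n+1})] R_n(z) - 4 d_{n+1} z R_{n-1}(z) for n ≥ 1. If P_n satisfies P_0=1, P_1(x)=x-c_1, P_{n+1}(x)=(x-c_{n+1})P_n(x) - d_{n+1}(x^2+1)P_{n-1}(x), then for all n ≥ 0 and all real x, R_n((x+i)/(x-i)) = 2^n P_n(x)/(x-i)^n. -/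
theorem stmt12 (c d g : ℕ → ℝ)
    (hg1 : 0 ≤ g 1 ∧ g 1 < 1)
    (hg : ∀ n, 1 ≤ n → 0 < g (n+1) ∧ g (n+1) < 1)
    (hchain : ∀ n, 1 ≤ n → d (n+1) = (1 - g n) * g (n+1))
    (P : ℕ → ℝ → ℝ) (R : ℕ → ℂ → ℂ)
    (hP0 : ∀ x, P 0 x = 1) (hP1 : ∀ x, P 1 x = x - c 1)
    (hPrec : ∀ n x, P (n+2) x = (x - c (n+2)) * P (n+1) x - d (n+2) * (x^2+1) * P n x)
    (hR0 : ∀ z, R 0 z = 1)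
    (hR1 : ∀ z, R 1 z = (1 + Complex.I * (c 1 : ℂ)) * z + (1 - Complex.I * (c 1 : ℂ)))
    (hRrec : ∀ n z, R (n+2) z
        = ((1 + Complex.I * (c (n+2) : ℂ)) * z + (1 - Complex.I * (c (n+2) : ℂ))) * R (n+1) z
          - 4 * (d (n+2) : ℂ) * z * R n z) :
    ∀ n : ℕ, ∀ x : ℝ,
      R n (((x:ℂ) + Complex.I)/((x:ℂ) - Complex.I))
        = 2^n * (P n x : ℂ) / ((x:ℂ) - Complex.I)^n := by
  have key : ∀ n : ℕ,
      (∀ x : ℝ, R n (((x:ℂ) + Complex.I)/((x:ℂ) - Complex.I))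
          = 2^n * (P n x : ℂ) / ((x:ℂ) - Complex.I)^n) ∧
      (∀ x : ℝ, R (n+1) (((x:ℂ) + Complex.I)/((x:ℂ) - Complex.I))
          = 2^(n+1) * (P (n+1) x : ℂ) / ((x:ℂ) - Complex.I)^(n+1)) := by
    intro n
    induction n with
    | zero =>
      constructor
      · intro x; simp [hR0, hP0]
      · intro x
        have hx : ((x:ℂ) - Complex.I) ≠ 0 := by
          intro h
          have := congrArg Complex.im h
          simp at this
        rw [hR1, hP1]
        push_cast
        have h2 : Complex.I ^ 2 = -1 := Complex.I_sq
        field_simp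
        ring_nf
        simp only [h2]
        ring
    | succ n ih =>
      refine ⟨ih.2, ?_⟩
      intro x
      have hx : ((x:ℂ) - Complex.I) ≠ 0 := by
        intro h
        have := congrArg Complex.im h
        simp at this
      rw [hRrec, ih.1 x, ih.2 x, hPrec]
      push_cast
      have h2 : Complex.I ^ 2 = -1 := Complex.I_sq
      have h3 : Complex.I ^ 3 = -Complex.I := by rw [pow_succ, h2]; ring
      have h4 : Complex.I ^ 4 = 1 := by rw [pow_succ, h3]; simp [Complex.I_mul_I]
      have h5 : Complex.I ^ 5 = Complex.I := by rw [pow_succ, h4]; ring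
      field_simp
      ring_nf
      simp only [h2, h3, h4, h5]
      ring
  intro n x
  exact (key n).1 x
end

section
/- Let c_1,...,c_n be real and d_2,...,d_n positive, with P_m defined by P_0=1, P_1(x)=x-c_1, P_{m+1}(x)=(x-c_{m+1})P_m(x)-d_{m+1}(x^2+1)P_{m-1}(x). Fix real p with P_m(p) ≠ 0 for 0 ≤ m ≤ n-1. Define r_{n,0} = c_1 - p and r_{n,m+1} = c_{m+2} - p - (p^2+1)d_{m+2}/r_{n,m} for 0 ≤ m ≤ n-2. Then r_{n,m} = -P_{m+1}(p)/P_m(p) for all 0 ≤ m ≤ n-1. -/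
theorem neg_div_of_eq_mul_sub_mul {K : Type*} [Field K] {a b u v w : K}
    (hv : v ≠ 0) (hw : w = a * v - b * u) :
    -w / v = -a - b / (-v / u) := by
  rw [hw]
  field_simp
  ring

theorem stmt17_general (n : ℕ) (c d : ℕ → ℝ) (p : ℝ)
    (P : ℕ → ℝ → ℝ)
    (hP0 : ∀ x, P 0 x = 1) (hP1 : ∀ x, P 1 x = x - c 1)
    (hPrec : ∀ m x, P (m+2) x = (x - c (m+2)) * P (m+1) x - d (m+2) * (x^2+1) * P m x)
    (hPnz : ∀ m, m + 1 ≤ n → P m p ≠ 0)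
    (r : ℕ → ℝ)
    (hr0 : r 0 = c 1 - p)
    (hrrec : ∀ m, m + 2 ≤ n → r (m+1) = c (m+2) - p - (p^2+1) * d (m+2) / r m) :
    ∀ m, m + 1 ≤ n → r m = - P (m+1) p / P m p := by
  intro m
  induction m with
  | zero =>
    intro _
    rw [hr0, hP0, hP1]
    ring
  | succ m ih =>
    intro hm
    rw [hrrec m hm, ih (by omega),
      neg_div_of_eq_mul_sub_mul (hPnz (m + 1) hm) (hPrec m p)]
    ring

theorem stmt17 (n : ℕ) (hn : 1 ≤ n) (c d : ℕ → ℝ) (p : ℝ)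
    (hd : ∀ k, 2 ≤ k → k ≤ n → 0 < d k)
    (P : ℕ → ℝ → ℝ)
    (hP0 : ∀ x, P 0 x = 1) (hP1 : ∀ x, P 1 x = x - c 1)
    (hPrec : ∀ m x, P (m+2) x = (x - c (m+2)) * P (m+1) x - d (m+2) * (x^2+1) * P m x)
    (hPnz : ∀ m, m + 1 ≤ n → P m p ≠ 0)
    (r : ℕ → ℝ)
    (hr0 : r 0 = c 1 - p)
    (hrrec : ∀ m, m + 2 ≤ n → r (m+1) = c (m+2) - p - (p^2+1) * d (m+2) / r m) :
    ∀ m, m + 1 ≤ n → r m = - P (m+1) p / P m p :=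
  stmt17_general n c d p P hP0 hP1 hPrec hPnz r hr0 hrrec
end
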